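/- arXiv:2504.17061 — 4 statements merged into one kernel-verified Lean document; each statement's English description precedes it below -/
import Mathlib

section
/- Let ε ∈ [0,1] and let P₀, P₁, …, P_N be nonatomic probability measures on a measurable space (S, Σ_S) such that P₀(E) ≥ min_{1≤i≤N} P_i(E) − ε/2 for every E ∈ Σ_S. Then there exist λ₁, …, λ_N ≥ 0 with Σ_{i=1}^N λ_i = 1 such that the signed measure R = P₀ − Σ_{i=1}^N λ_i P_i satisfies ‖R‖₁ ≤ ε; in particular |P₀(E) − Σ_{i=1}^N λ_i P_i(E)| ≤ ε/2 for every E ∈ Σ_S. -/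
/-!
It suffices to find weights `l` in the simplex with `∑ i, l i * P i E ≤ P₀ E + ε / 2` for every
measurable `E`: applied to `Eᶜ` this gives the two-sided bound, and a Hahn decomposition turns
the two-sided bound into the total variation bound.

If no such `l` existed, compactness of the simplex would give finitely many sets `E j` and a
margin `δ > 0` such that every `l` satisfies `∑ i, l i * P i (E j) ≥ P₀ (E j) + ε / 2 + δ` for
some `j`, and Ville's alternative would give convex weights `c` with
`∑ j, c j * (P i (E j) - P₀ (E j)) ≥ ε / 2 + δ` for every `i`. Approximate Lyapunov convexity of
the nonatomic vector measure `(P₀, P₁, …, P_N)` then replaces the function `∑ j, c j • 1_{E j}`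
by the indicator of a single set `F`, at which the hypothesis fails.
-/

open MeasureTheory

def Nonatomic {S : Type*} [MeasurableSpace S] (μ : Measure S) : Prop :=
  ∀ E : Set S, MeasurableSet E → 0 < μ E →
    ∃ F : Set S, F ⊆ E ∧ MeasurableSet F ∧ 0 < μ F ∧ μ F < μ E

open Set Filter Topology
open scoped ENNReal Matrix

namespace Matrix

variable {α γ : Type*} [Fintype α] [Fintype γ]

theorem exists_ne_zero_mulVec_eq_zero_of_card_lt (A : Matrix α γ ℝ) {T : Finset γ}
    (hT : Fintype.card α < T.card) : ∃ c : γ → ℝ, c ≠ 0 ∧ A *ᵥ c = 0 ∧ ∀ g ∉ T, c g = 0 := by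
  classical
  have hdep : ¬ LinearIndependent ℝ (fun g : T => Aᵀ g) := fun hli => by
    have := hli.fintype_card_le_finrank
    simp only [Fintype.card_coe, Module.finrank_fintype_fun_eq_card] at this
    omega
  obtain ⟨f, hf, g₀, hg₀⟩ := Fintype.not_linearIndependent_iff.mp hdep
  refine ⟨fun g => if h : g ∈ T then f ⟨g, h⟩ else 0, fun h => hg₀ ?_, ?_, fun g hg => dif_neg hg⟩
  · simpa using congrFun h g₀
  ext a
  have hfa := congrFun hf a
  simp only [Finset.sum_apply, Pi.smul_apply, transpose_apply, smul_eq_mul, Pi.zero_apply] at hfa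
  calc (A *ᵥ fun g => if h : g ∈ T then f ⟨g, h⟩ else 0) a
      = ∑ g ∈ T, A a g * if h : g ∈ T then f ⟨g, h⟩ else 0 :=
        (Finset.sum_subset (Finset.subset_univ T) fun g _ hg => by simp [hg]).symm
    _ = ∑ g : T, f g * A a g := by
        rw [← Finset.sum_coe_sort T]
        exact Finset.sum_congr rfl fun g _ => by simp [mul_comm]
    _ = 0 := hfa

theorem card_fractional_le_of_mem_extremePoints (A : Matrix α γ ℝ) {p : α → ℝ} {y : γ → ℝ}
    (hy : y ∈ (Icc 0 1 ∩ {y | A *ᵥ y = p}).extremePoints ℝ) :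
    (Finset.univ.filter fun g => y g ∈ Ioo 0 1).card ≤ Fintype.card α := by
  by_contra! hlt
  obtain ⟨c, hc, hAc, hcT⟩ := A.exists_ne_zero_mulVec_eq_zero_of_card_lt hlt
  obtain ⟨⟨hy0, hy1⟩, hAy⟩ := hy.1
  have hnear : ∀ g, ∀ᶠ t in 𝓝 (0 : ℝ), y g + t * c g ∈ Icc 0 1 ∧ y g - t * c g ∈ Icc 0 1 := by
    intro g
    by_cases hcg : c g = 0
    · simpa [hcg] using ⟨hy0 g, hy1 g⟩
    have hyg : y g ∈ Ioo 0 1 := by simpa using not_imp_comm.mp (hcT g) hcg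
    have hIoo := isOpen_Ioo.mem_nhds hyg
    have hplus := (by fun_prop : Continuous fun t : ℝ => y g + t * c g).tendsto' 0 (y g) (by simp)
    have hminus := (by fun_prop : Continuous fun t : ℝ => y g - t * c g).tendsto' 0 (y g) (by simp)
    exact (hplus.eventually_mem hIoo).and (hminus.eventually_mem hIoo) |>.mono
      fun t ht => ⟨Ioo_subset_Icc_self ht.1, Ioo_subset_Icc_self ht.2⟩
  obtain ⟨t, ht, ht0⟩ := ((eventually_all.mpr hnear).filter_mono nhdsWithin_le_nhds |>.and
    self_mem_nhdsWithin).exists (f := 𝓝[≠] (0 : ℝ))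
  have hmem : ∀ s : ℝ, (∀ g, y g + s * c g ∈ Icc 0 1) →
      y + s • c ∈ Icc 0 1 ∩ {y | A *ᵥ y = p} := fun s hs =>
    ⟨⟨fun g => (hs g).1, fun g => (hs g).2⟩, by simpa [mulVec_add, mulVec_smul, hAc] using hAy⟩
  have hseg : y ∈ openSegment ℝ (y + t • c) (y + (-t) • c) :=
    ⟨1 / 2, 1 / 2, by norm_num, by norm_num, by norm_num, by ext; simp; ring⟩
  have := ((mem_extremePoints.mp hy).2 _ (hmem t fun g => (ht g).1) _
    (hmem (-t) fun g => by simpa [sub_eq_add_neg] using (ht g).2) hseg).1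
  exact hc ((smul_eq_zero.mp (by simpa using this)).resolve_left ht0)

theorem exists_finset_abs_sum_sub_mulVec_le (A : Matrix α γ ℝ) {δ : ℝ} (hδ : 0 ≤ δ)
    (hA : ∀ a g, |A a g| ≤ δ) {x : γ → ℝ} (hx : x ∈ Icc 0 1) :
    ∃ T : Finset γ, ∀ a, |∑ g ∈ T, A a g - (A *ᵥ x) a| ≤ Fintype.card α * δ := by
  classical
  have hK : IsCompact (Icc 0 1 ∩ {y | A *ᵥ y = A *ᵥ x}) :=
    isCompact_Icc.inter_right (isClosed_eq (by fun_prop) continuous_const)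
  obtain ⟨y, hy⟩ := hK.extremePoints_nonempty ⟨x, hx, rfl⟩
  obtain ⟨⟨hy0, hy1⟩, hAy⟩ := hy.1
  have hterm : ∀ a g, |A a g * ((if y g = 1 then 1 else 0) - y g)| ≤
      if y g ∈ Ioo 0 1 then δ else 0 := by
    intro a g
    by_cases hyg : y g ∈ Ioo 0 1
    · rw [if_pos hyg, if_neg hyg.2.ne, zero_sub, abs_mul, abs_neg, abs_of_pos hyg.1]
      exact mul_le_of_le_one_right (abs_nonneg _) hyg.2.le |>.trans (hA a g)
    · rcases (hy0 g).eq_or_lt with h0 | h0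
      · simp [← h0]
      · simp [(hy1 g).eq_of_not_lt fun h1 => hyg ⟨h0, h1⟩]
  refine ⟨Finset.univ.filter fun g => y g = 1, fun a => ?_⟩
  rw [← hAy.out, Finset.sum_filter, mulVec, dotProduct, ← Finset.sum_sub_distrib]
  calc |∑ g, ((if y g = 1 then A a g else 0) - A a g * y g)|
      ≤ ∑ g, if y g ∈ Ioo 0 1 then δ else 0 := by
        refine (Finset.abs_sum_le_sum_abs _ _).trans (Finset.sum_le_sum fun g _ => ?_)
        simpa [mul_sub] using hterm a g
    _ = (Finset.univ.filter fun g => y g ∈ Ioo 0 1).card * δ := by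
        rw [← Finset.sum_filter, Finset.sum_const, nsmul_eq_mul]
    _ ≤ Fintype.card α * δ := by
        gcongr
        exact_mod_cast A.card_fractional_le_of_mem_extremePoints hy

theorem exists_mem_stdSimplex_vecMul_nonneg {κ ι : Type*} [Fintype κ] [Fintype ι] [Nonempty ι]
    (W : Matrix κ ι ℝ)
    (h : ∀ l ∈ stdSimplex ℝ ι, ∃ j, 0 ≤ (W *ᵥ l) j) : ∃ c ∈ stdSimplex ℝ κ, 0 ≤ c ᵥ* W := by
  classical
  by_contra! hcon
  have hdisj : Disjoint ((· ᵥ* W) '' stdSimplex ℝ κ) (Ici 0) :=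
    disjoint_left.mpr fun _ ⟨c, hc, hcW⟩ h0 => hcon c hc (by subst hcW; exact h0)
  obtain ⟨f, u, v, hfC, huv, hfD⟩ := geometric_hahn_banach_compact_closed
    ((convex_stdSimplex ℝ κ).linear_image W.vecMulLinear)
    ((isCompact_stdSimplex ℝ κ).image (by fun_prop)) (convex_Ici 0) isClosed_Ici hdisj
  have hv : v < 0 := by simpa using hfD 0 self_mem_Ici
  have hf_nonneg : ∀ d, 0 ≤ d → 0 ≤ f d := fun d hd => by
    by_contra! hneg
    have := hfD ((v / f d) • d) (smul_nonneg (div_nonneg_of_nonpos hv.le hneg.le) hd)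
    rw [map_smul, smul_eq_mul, div_mul_cancel₀ _ hneg.ne] at this
    exact this.false
  set φ : ι → ℝ := fun i => f fun j => if i = j then 1 else 0
  have hφ : 0 ≤ φ := fun i => hf_nonneg _ fun j => by dsimp; split_ifs <;> norm_num
  have hf : ∀ x, f x = ∑ i, x i * φ i := fun x => by
    simpa using f.toLinearMap.pi_apply_eq_sum_univ x
  have hWφ : ∀ j, (W *ᵥ φ) j < 0 := fun j => by
    have hfW := hfC _ ⟨Pi.single j 1, single_mem_stdSimplex ℝ j, single_one_vecMul j W⟩
    rw [hf] at hfW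
    exact (show (W *ᵥ φ) j = _ from rfl).trans_lt (hfW.trans (huv.trans hv))
  obtain ⟨j₀, -⟩ := h _ (single_mem_stdSimplex ℝ (Classical.arbitrary ι))
  have hσ : 0 < ∑ i, φ i := by
    refine (Finset.sum_nonneg fun i _ => hφ i).lt_of_ne fun h0 => (hWφ j₀).ne ?_
    have : φ = 0 := funext fun i =>
      (Finset.sum_eq_zero_iff_of_nonneg fun i _ => hφ i).mp h0.symm i (Finset.mem_univ i)
    simp [this]
  obtain ⟨j, hj⟩ := h ((∑ i, φ i)⁻¹ • φ)
    ⟨fun i => smul_nonneg (inv_nonneg.mpr hσ.le) (hφ i), by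
      simp [← Finset.mul_sum, inv_mul_cancel₀ hσ.ne']⟩
  rw [mulVec_smul, Pi.smul_apply, smul_eq_mul] at hj
  exact (mul_neg_of_pos_of_neg (inv_pos.mpr hσ) (hWφ j)).not_ge hj

end Matrix

theorem IsCompact.exists_finset_forall_exists_le {X β : Type*} [TopologicalSpace X] {K : Set X}
    (hK : IsCompact K) {φ : β → X → ℝ} (hφ : ∀ b, Continuous (φ b))
    (h : ∀ x ∈ K, ∃ b, 0 < φ b x) :
    ∃ (t : Finset β) (δ : ℝ), 0 < δ ∧ ∀ x ∈ K, ∃ b ∈ t, δ ≤ φ b x := by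
  classical
  obtain ⟨t, ht⟩ := hK.elim_finite_subcover (fun p : β × ℕ => {x | 1 / ((p.2 : ℝ) + 1) < φ p.1 x})
    (fun p => isOpen_lt continuous_const (hφ p.1)) fun x hx => by
      obtain ⟨b, hb⟩ := h x hx
      obtain ⟨n, hn⟩ := exists_nat_one_div_lt hb
      exact mem_iUnion.mpr ⟨(b, n), hn⟩
  refine ⟨t.image Prod.fst, 1 / ((t.sup Prod.snd : ℕ) + 1), by positivity, fun x hx => ?_⟩
  obtain ⟨p, hpt, hpx⟩ := mem_iUnion₂.mp (ht hx)
  refine ⟨p.1, Finset.mem_image_of_mem _ hpt, le_trans ?_ (le_of_lt hpx)⟩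
  gcongr
  exact Finset.le_sup (f := Prod.snd) hpt

section

variable {S : Type*} [MeasurableSpace S]

theorem exists_mem_forall_measure_le (ν : Measure S) {𝓕 : Set (Set S)} (hne : 𝓕.Nonempty)
    (hunion : ∀ F ∈ 𝓕, ∀ G ∈ 𝓕, F ∪ G ∈ 𝓕)
    (hiUnion : ∀ F : ℕ → Set S, Monotone F → (∀ n, F n ∈ 𝓕) → ⋃ n, F n ∈ 𝓕) :
    ∃ W ∈ 𝓕, ∀ F ∈ 𝓕, ν F ≤ ν W := by
  obtain ⟨u, -, hu, hu𝓕⟩ := exists_seq_tendsto_sSup (hne.image ν) (OrderTop.bddAbove _)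
  choose F hF𝓕 hFu using hu𝓕
  have hacc : ∀ n, accumulate F n ∈ 𝓕 := by
    intro n
    induction n with
    | zero => simpa using hF𝓕 0
    | succ n ih => rw [accumulate_succ]; exact hunion _ ih _ (hF𝓕 _)
  have hW := hiUnion _ monotone_accumulate hacc
  rw [iUnion_accumulate] at hW
  refine ⟨⋃ n, F n, hW, fun G hG =>
    (le_csSup (OrderTop.bddAbove _) (mem_image_of_mem ν hG)).trans ?_⟩
  refine le_of_tendsto' hu fun n => ?_
  rw [← hFu n]
  exact measure_mono (subset_iUnion F n)

namespace Nonatomic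

variable {ν : Measure S} [IsFiniteMeasure ν]

theorem exists_subset_measure_le_half (hν : Nonatomic ν) {E : Set S} (hE : MeasurableSet E)
    (hpos : 0 < ν E) : ∃ F ⊆ E, MeasurableSet F ∧ 0 < ν F ∧ ν F ≤ ν E / 2 := by
  obtain ⟨F, hFE, hF, hF0, hFE'⟩ := hν E hE hpos
  have hdiff : ν (E \ F) = ν E - ν F := measure_sdiff hFE hF.nullMeasurableSet (measure_ne_top ν F)
  by_cases h : ν F ≤ ν E / 2
  · exact ⟨F, hFE, hF, hF0, h⟩
  refine ⟨E \ F, sdiff_subset, hE.diff hF, hdiff ▸ tsub_pos_of_lt hFE', ?_⟩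
  rw [hdiff, tsub_le_iff_right]
  calc ν E = ν E / 2 + ν E / 2 := (ENNReal.add_halves _).symm
    _ ≤ ν E / 2 + ν F := by gcongr; exact (not_le.mp h).le

theorem exists_subset_measure_le (hν : Nonatomic ν) {E : Set S} (hE : MeasurableSet E)
    (hpos : 0 < ν E) {δ : ℝ≥0∞} (hδ : 0 < δ) :
    ∃ F ⊆ E, MeasurableSet F ∧ 0 < ν F ∧ ν F ≤ δ := by
  have halving : ∀ n : ℕ, ∃ F ⊆ E, MeasurableSet F ∧ 0 < ν F ∧ ν F ≤ ν E * 2⁻¹ ^ n := by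
    intro n
    induction n with
    | zero => exact ⟨E, subset_rfl, hE, hpos, by simp⟩
    | succ n ih =>
      obtain ⟨F, hFE, hF, hF0, hFn⟩ := ih
      obtain ⟨G, hGF, hG, hG0, hGF'⟩ := hν.exists_subset_measure_le_half hF hF0
      refine ⟨G, hGF.trans hFE, hG, hG0, ?_⟩
      calc ν G ≤ ν F / 2 := hGF'
        _ ≤ ν E * 2⁻¹ ^ n / 2 := by gcongr
        _ = ν E * 2⁻¹ ^ (n + 1) := by rw [pow_succ, div_eq_mul_inv, mul_assoc]
  obtain ⟨n, hn⟩ := ENNReal.exists_inv_two_pow_lt (ENNReal.div_pos hδ.ne' (measure_ne_top ν E)).ne'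
  obtain ⟨F, hFE, hF, hF0, hFn⟩ := halving n
  refine ⟨F, hFE, hF, hF0, hFn.trans ?_⟩
  calc ν E * 2⁻¹ ^ n ≤ ν E * (δ / ν E) := by gcongr
    _ = δ := ENNReal.mul_div_cancel hpos.ne' (measure_ne_top ν E)

/-- Otherwise the measurable subsets of `E` of measure at most `δ / 2` would be closed under
unions, and one of maximal measure could still be enlarged inside `E`. -/
theorem exists_subset_half_lt_measure_le (hν : Nonatomic ν) {E : Set S} (hE : MeasurableSet E)
    {δ : ℝ≥0∞} (hδ : 0 < δ) (hδE : δ < ν E) :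
    ∃ F ⊆ E, MeasurableSet F ∧ δ / 2 < ν F ∧ ν F ≤ δ := by
  by_contra! h
  set 𝓕 := {F | F ⊆ E ∧ MeasurableSet F ∧ ν F ≤ δ / 2}
  have hunion : ∀ F ∈ 𝓕, ∀ G ∈ 𝓕, F ∪ G ∈ 𝓕 := by
    rintro F ⟨hFE, hF, hFδ⟩ G ⟨hGE, hG, hGδ⟩
    refine ⟨union_subset hFE hGE, hF.union hG, not_lt.mp fun hlt => ?_⟩
    refine (h _ (union_subset hFE hGE) (hF.union hG) hlt).not_ge ?_
    calc ν (F ∪ G) ≤ ν F + ν G := measure_union_le F G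
      _ ≤ δ / 2 + δ / 2 := add_le_add hFδ hGδ
      _ = δ := ENNReal.add_halves δ
  have hiUnion : ∀ F : ℕ → Set S, Monotone F → (∀ n, F n ∈ 𝓕) → ⋃ n, F n ∈ 𝓕 := by
    refine fun F hmono hF => ⟨iUnion_subset fun n => (hF n).1, .iUnion fun n => (hF n).2.1, ?_⟩
    rw [hmono.measure_iUnion]
    exact iSup_le fun n => (hF n).2.2
  obtain ⟨W, ⟨hWE, hW, hWδ⟩, hWmax⟩ :=
    exists_mem_forall_measure_le ν (𝓕 := 𝓕) ⟨∅, empty_subset E, .empty, by simp⟩ hunion hiUnion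
  have hWlt : ν W < ν E := hWδ.trans_lt ((ENNReal.half_le_self).trans_lt hδE)
  obtain ⟨G, hGW, hG, hG0, hGδ⟩ := hν.exists_subset_measure_le (hE.diff hW)
    ((tsub_pos_of_lt hWlt).trans_le le_measure_sdiff) (ENNReal.half_pos hδ.ne')
  have hWG := hWmax _ (hunion W ⟨hWE, hW, hWδ⟩ G ⟨hGW.trans sdiff_subset, hG, hGδ⟩)
  rw [measure_union (disjoint_sdiff_right.mono_right hGW) hG] at hWG
  exact hWG.not_gt (ENNReal.lt_add_right (measure_ne_top ν W) hG0.ne')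

theorem exists_measurable_fin_measure_preimage_le (hν : Nonatomic ν) {δ : ℝ≥0∞} (hδ : 0 < δ) :
    ∃ (n : ℕ) (π : S → Fin n), Measurable π ∧ ∀ k, ν (π ⁻¹' {k}) ≤ δ := by
  suffices key : ∀ m : ℕ, ∀ E, MeasurableSet E → ν E ≤ m * (δ / 2) →
      ∃ (n : ℕ) (π : S → Fin n), Measurable π ∧ ∀ k, ν (E ∩ π ⁻¹' {k}) ≤ δ by
    obtain ⟨m, hm⟩ :=
      ENNReal.exists_nat_mul_gt (ENNReal.half_pos hδ.ne').ne' (measure_ne_top ν univ)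
    simpa using key m univ .univ hm.le
  have single : ∀ E, ν E ≤ δ →
      ∃ (n : ℕ) (π : S → Fin n), Measurable π ∧ ∀ k, ν (E ∩ π ⁻¹' {k}) ≤ δ := fun E hE =>
    ⟨1, fun _ => 0, measurable_const, fun _ => (measure_mono inter_subset_left).trans hE⟩
  intro m
  induction m with
  | zero => exact fun E _ hE => single E (by simp_all)
  | succ m ih =>
    intro E hE hEm
    by_cases hEδ : ν E ≤ δ
    · exact single E hEδ
    obtain ⟨F, hFE, hF, hFδ, hFδ'⟩ := hν.exists_subset_half_lt_measure_le hE hδ (not_le.mp hEδ)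
    have hrest : ν (E \ F) ≤ m * (δ / 2) := by
      have hsplit := measure_sdiff_add_inter (μ := ν) E hF
      rw [inter_eq_right.mpr hFE] at hsplit
      rw [← ENNReal.add_le_add_iff_right (measure_ne_top ν F), hsplit]
      calc ν E ≤ m * (δ / 2) + δ / 2 := by simpa [add_mul] using hEm
        _ ≤ m * (δ / 2) + ν F := by gcongr
    obtain ⟨n, π, hπ, hπδ⟩ := ih (E \ F) (hE.diff hF) hrest
    classical
    refine ⟨n + 1, fun y => if y ∈ F then 0 else (π y).succ, Measurable.ite hF measurable_const
      (measurable_from_top.comp hπ : Measurable (Fin.succ ∘ π)), ?_⟩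
    refine Fin.cases ((measure_mono fun y hy => ?_).trans hFδ') (fun k =>
      (measure_mono fun y hy => ?_).trans (hπδ k))
    · by_contra hyF
      simp [hyF] at hy
    · by_cases hyF : y ∈ F
      · simp [hyF, eq_comm] at hy
      · simp_all

theorem finsetSum {α : Type*} [Fintype α] {μ : α → Measure S}
    [∀ a, IsFiniteMeasure (μ a)] (hμ : ∀ a, Nonatomic (μ a)) : Nonatomic (∑ a, μ a) := by
  intro E hE hpos
  have hle : ∀ a A, μ a A ≤ (∑ b, μ b) A := fun a A => by
    rw [Measure.finsetSum_apply]
    exact Finset.single_le_sum (f := fun b => μ b A) (fun _ _ => zero_le) (Finset.mem_univ a)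
  rw [Measure.finsetSum_apply, Finset.sum_pos_iff] at hpos
  obtain ⟨a, -, ha⟩ := hpos
  obtain ⟨F, hFE, hF, hF0, hFE'⟩ := hμ a E hE ha
  refine ⟨F, hFE, hF, hF0.trans_le (hle a F), ?_⟩
  have hdiff : 0 < μ a (E \ F) := (tsub_pos_of_lt hFE').trans_le le_measure_sdiff
  have hsplit := measure_add_sdiff (μ := ∑ b, μ b) hF.nullMeasurableSet E
  rw [union_eq_right.mpr hFE] at hsplit
  rw [← hsplit]
  exact ENNReal.lt_add_right (measure_ne_top _ F) (hdiff.trans_le (hle a _)).ne'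

end Nonatomic

theorem toReal_measure_preimage_finset {γ : Type*} [MeasurableSpace γ]
    [MeasurableSingletonClass γ] (μ : Measure S) [IsFiniteMeasure μ] {ρ : S → γ}
    (hρ : Measurable ρ) (T : Finset γ) :
    (μ (ρ ⁻¹' T)).toReal = ∑ g ∈ T, (μ (ρ ⁻¹' {g})).toReal :=
  (sum_measureReal_preimage_singleton T fun g _ => hρ (measurableSet_singleton g)).symm

theorem exists_finset_abs_measure_preimage_sub_le {α γ : Type*} [Fintype α] [Fintype γ]
    [MeasurableSpace γ] [MeasurableSingletonClass γ] (μ : α → Measure S)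
    [∀ a, IsFiniteMeasure (μ a)] {ρ : S → γ} (hρ : Measurable ρ) {δ : ℝ} (hδ : 0 ≤ δ)
    (hfib : ∀ a g, (μ a (ρ ⁻¹' {g})).toReal ≤ δ) {x : γ → ℝ} (hx : x ∈ Icc 0 1) :
    ∃ T : Finset γ, ∀ a,
      |(μ a (ρ ⁻¹' T)).toReal - ∑ g, x g * (μ a (ρ ⁻¹' {g})).toReal| ≤ Fintype.card α * δ := by
  obtain ⟨T, hT⟩ := Matrix.exists_finset_abs_sum_sub_mulVec_le
    (fun a g => (μ a (ρ ⁻¹' {g})).toReal) hδ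
    (fun a g => (abs_of_nonneg ENNReal.toReal_nonneg).trans_le (hfib a g)) hx
  refine ⟨T, fun a => ?_⟩
  rw [toReal_measure_preimage_finset _ hρ]
  simpa [Matrix.mulVec, dotProduct, mul_comm] using hT a

/-- Cut `S` into pieces that are small for every `μ a` and on which each `E j` is all or nothing;
rounding the weights `∑ j, c j * [piece ⊆ E j]` to a vertex then selects the pieces forming `F`. -/
theorem exists_measurableSet_abs_measure_sub_sum_le {α κ : Type*} [Fintype α] [Fintype κ]
    (μ : α → Measure S) [∀ a, IsFiniteMeasure (μ a)] (hμ : ∀ a, Nonatomic (μ a))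
    {E : κ → Set S} (hE : ∀ j, MeasurableSet (E j)) {c : κ → ℝ} (hc : c ∈ stdSimplex ℝ κ)
    {η : ℝ} (hη : 0 < η) :
    ∃ F, MeasurableSet F ∧ ∀ a, |(μ a F).toReal - ∑ j, c j * (μ a (E j)).toReal| ≤ η := by
  classical
  set δ := η / (Fintype.card α + 1)
  have hδ : 0 < δ := by positivity
  obtain ⟨n, π, hπ, hπδ⟩ := (Nonatomic.finsetSum hμ).exists_measurable_fin_measure_preimage_le
    (ENNReal.ofReal_pos.mpr hδ)
  set ρ : S → Fin n × (κ → Bool) := fun y => (π y, fun j => decide (y ∈ E j))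
  have hρ : Measurable ρ :=
    hπ.prodMk (measurable_pi_lambda _ fun j => measurable_to_bool (by convert hE j; ext; simp))
  have hfib : ∀ a g, (μ a (ρ ⁻¹' {g})).toReal ≤ δ := fun a g => by
    refine ENNReal.toReal_le_of_le_ofReal hδ.le (le_trans ?_ (hπδ g.1))
    rw [Measure.finsetSum_apply]
    exact (measure_mono fun y hy => congrArg Prod.fst hy).trans
      (Finset.single_le_sum (f := fun b => μ b _) (fun _ _ => zero_le) (Finset.mem_univ a))
  set x : Fin n × (κ → Bool) → ℝ := fun g => ∑ j, if g.2 j then c j else 0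
  have hx : x ∈ Icc 0 1 := by
    refine ⟨fun g => Finset.sum_nonneg fun j _ => ?_,
      fun g => (Finset.sum_le_sum fun j _ => ?_).trans hc.2.le⟩ <;> split_ifs <;> simp [hc.1 j]
  obtain ⟨T, hT⟩ := exists_finset_abs_measure_preimage_sub_le μ hρ hδ.le hfib hx
  refine ⟨ρ ⁻¹' T, hρ T.measurableSet, fun a => ?_⟩
  have hEj : ∀ j, E j = ρ ⁻¹' ↑(Finset.univ.filter fun g : Fin n × (κ → Bool) => g.2 j) :=
    fun j => by ext y; simp [ρ]
  have hcomb : ∑ j, c j * (μ a (E j)).toReal = ∑ g, x g * (μ a (ρ ⁻¹' {g})).toReal := by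
    simp only [hEj, toReal_measure_preimage_finset _ hρ, Finset.sum_filter, Finset.mul_sum,
      mul_ite, mul_zero, x, Finset.sum_mul, ite_mul, zero_mul]
    exact Finset.sum_comm
  rw [hcomb]
  refine (hT a).trans ?_
  rw [mul_div_assoc', div_le_iff₀ (by positivity)]
  nlinarith

theorem exists_mem_stdSimplex_forall_sum_le {ι : Type*} [Fintype ι] [Nonempty ι]
    (P₀ : Measure S) (P : ι → Measure S) [IsFiniteMeasure P₀] [∀ i, IsFiniteMeasure (P i)]
    (hP₀ : Nonatomic P₀) (hP : ∀ i, Nonatomic (P i)) {r : ℝ}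
    (hmin : ∀ E, MeasurableSet E → ∃ i, (P i E).toReal ≤ (P₀ E).toReal + r) :
    ∃ l ∈ stdSimplex ℝ ι, ∀ E, MeasurableSet E →
      ∑ i, l i * (P i E).toReal ≤ (P₀ E).toReal + r := by
  by_contra! hcon
  obtain ⟨t, δ, hδ, ht⟩ := (isCompact_stdSimplex ℝ ι).exists_finset_forall_exists_le
    (φ := fun (E : {E : Set S // MeasurableSet E}) l =>
      ∑ i, l i * (P i E).toReal - ((P₀ E).toReal + r))
    (fun E => by fun_prop) fun l hl => by
      obtain ⟨E, hE, hlt⟩ := hcon l hl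
      exact ⟨⟨E, hE⟩, sub_pos.mpr hlt⟩
  set W : Matrix t ι ℝ := fun E i => (P i E).toReal - (P₀ E).toReal - r - δ
  obtain ⟨c, hc, hcW⟩ := W.exists_mem_stdSimplex_vecMul_nonneg fun l hl => by
    obtain ⟨E, hEt, hE⟩ := ht l hl
    refine ⟨⟨E, hEt⟩, ?_⟩
    simp only [W, Matrix.mulVec, dotProduct, sub_mul, Finset.sum_sub_distrib, ← Finset.mul_sum,
      hl.2, mul_one]
    simp only [mul_comm _ (l _)]
    linarith
  have : ∀ o : Option ι, IsFiniteMeasure (o.elim P₀ P) := fun o => by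
    cases o <;> dsimp <;> infer_instance
  obtain ⟨F, hF, hFc⟩ := exists_measurableSet_abs_measure_sub_sum_le
    (fun o : Option ι => o.elim P₀ P) (fun o => by cases o; exacts [hP₀, hP _])
    (E := fun E : t => E.1.1) (fun E => E.1.2) hc
    (η := δ / 3) (by positivity)
  obtain ⟨i, hi⟩ := hmin F hF
  have h0 : |(P₀ F).toReal - ∑ E, c E * (P₀ E).toReal| ≤ δ / 3 := hFc none
  have hi' : |(P i F).toReal - ∑ E, c E * (P i E).toReal| ≤ δ / 3 := hFc (some i)
  have hci := hcW i
  simp only [W, Matrix.vecMul, dotProduct, mul_sub, Finset.sum_sub_distrib, ← Finset.sum_mul, hc.2,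
    one_mul, Pi.zero_apply] at hci
  linarith [abs_le.mp h0, abs_le.mp hi']

theorem abs_sub_sum_le_of_forall_sum_le {ι : Type*} [Fintype ι] {P₀ : Measure S}
    {P : ι → Measure S} [IsProbabilityMeasure P₀] [∀ i, IsProbabilityMeasure (P i)]
    {l : ι → ℝ} (hl : l ∈ stdSimplex ℝ ι) {r : ℝ}
    (h : ∀ E, MeasurableSet E → ∑ i, l i * (P i E).toReal ≤ (P₀ E).toReal + r)
    {E : Set S} (hE : MeasurableSet E) : |(P₀ E).toReal - ∑ i, l i * (P i E).toReal| ≤ r := by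
  have hcompl : ∀ (μ : Measure S) [IsProbabilityMeasure μ], (μ Eᶜ).toReal = 1 - (μ E).toReal :=
    fun μ _ => probReal_compl_eq_one_sub hE
  have hEc := h Eᶜ hE.compl
  simp only [hcompl, mul_sub, mul_one, Finset.sum_sub_distrib, hl.2] at hEc
  exact abs_le.mpr ⟨by linarith [h E hE], by linarith⟩

theorem MeasureTheory.SignedMeasure.totalVariation_univ_le {s : SignedMeasure S} {r : ℝ}
    (h : ∀ E, MeasurableSet E → |s E| ≤ r) : s.totalVariation univ ≤ ENNReal.ofReal (2 * r) := by
  obtain ⟨D, hD, hD0, hD0', hpos, hneg⟩ := s.toJordanDecomposition_spec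
  have hsD : 0 ≤ s D := VectorMeasure.nonneg_of_zero_le_restrict s hD0
  have hsDc : s Dᶜ ≤ 0 := VectorMeasure.nonpos_of_restrict_le_zero s hD0'
  rw [totalVariation, Measure.add_apply, hpos, hneg, toMeasureOfZeroLE_apply _ _ hD .univ,
    toMeasureOfLEZero_apply _ _ hD.compl .univ]
  simp only [inter_univ]
  rw [← ENNReal.ofReal_eq_coe_nnreal, ← ENNReal.ofReal_eq_coe_nnreal,
    ← ENNReal.ofReal_add hsD (neg_nonneg.mpr hsDc)]
  exact ENNReal.ofReal_le_ofReal
    (by linarith [(abs_le.mp (h D hD)).2, (abs_le.mp (h Dᶜ hD.compl)).1])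

end

theorem stmt14_general {S : Type*} [MeasurableSpace S]
    {N : ℕ} (hN : 1 ≤ N) {ε : ℝ}
    (P₀ : Measure S) (P : Fin N → Measure S)
    [IsProbabilityMeasure P₀] [∀ i, IsProbabilityMeasure (P i)]
    (hP₀na : Nonatomic P₀) (hPna : ∀ i, Nonatomic (P i))
    (hmin : ∀ E : Set S, MeasurableSet E →
      (⨅ i : Fin N, (P i E).toReal) - ε / 2 ≤ (P₀ E).toReal) :
    ∃ l : Fin N → ℝ, (∀ i, 0 ≤ l i) ∧ (∑ i, l i) = 1 ∧
      (P₀.toSignedMeasure - ∑ i, l i • (P i).toSignedMeasure).totalVariation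
          Set.univ ≤ ENNReal.ofReal ε ∧
      ∀ E : Set S, MeasurableSet E →
        |(P₀ E).toReal - ∑ i, l i * (P i E).toReal| ≤ ε / 2 := by
  have : Nonempty (Fin N) := ⟨⟨0, hN⟩⟩
  obtain ⟨l, hl, hle⟩ := exists_mem_stdSimplex_forall_sum_le P₀ P hP₀na hPna (r := ε / 2)
    fun E hE => by
      obtain ⟨i, hi⟩ := exists_eq_ciInf_of_finite (f := fun i => (P i E).toReal)
      exact ⟨i, by linarith [hmin E hE]⟩
  have habs := fun E (hE : MeasurableSet E) => abs_sub_sum_le_of_forall_sum_le hl hle hE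
  refine ⟨l, hl.1, hl.2, ?_, habs⟩
  calc _ ≤ ENNReal.ofReal (2 * (ε / 2)) := SignedMeasure.totalVariation_univ_le fun E hE => by
          simpa [hE, measureReal_def] using habs E hE
    _ = ENNReal.ofReal ε := by ring_nf

/-- Let `ε ∈ [0,1]` and let `P₀, P₁, …, P_N` be nonatomic probability
measures such that `P₀(E) ≥ min_{1≤i≤N} Pᵢ(E) − ε/2` for every measurable `E`.  Then
there are weights `λ₁,…,λ_N ≥ 0` summing to `1` such that the signed measure
`R = P₀ − Σᵢ λᵢ Pᵢ` satisfies `‖R‖₁ ≤ ε`; in particular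
`|P₀(E) − Σᵢ λᵢ Pᵢ(E)| ≤ ε/2` for every measurable `E`. -/
theorem stmt14 {S : Type*} [MeasurableSpace S]
    {N : ℕ} (hN : 1 ≤ N) {ε : ℝ} (hε0 : 0 ≤ ε) (hε1 : ε ≤ 1)
    (P₀ : Measure S) (P : Fin N → Measure S)
    [IsProbabilityMeasure P₀] [∀ i, IsProbabilityMeasure (P i)]
    (hP₀na : Nonatomic P₀) (hPna : ∀ i, Nonatomic (P i))
    (hmin : ∀ E : Set S, MeasurableSet E →
      (⨅ i : Fin N, (P i E).toReal) - ε / 2 ≤ (P₀ E).toReal) :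
    ∃ l : Fin N → ℝ, (∀ i, 0 ≤ l i) ∧ (∑ i, l i) = 1 ∧
      (P₀.toSignedMeasure - ∑ i, l i • (P i).toSignedMeasure).totalVariation
          Set.univ ≤ ENNReal.ofReal ε ∧
      ∀ E : Set S, MeasurableSet E →
        |(P₀ E).toReal - ∑ i, l i * (P i E).toReal| ≤ ε / 2 :=
  stmt14_general hN P₀ P hP₀na hPna hmin
end

section
/- Let X = {(x₁, x₂) ∈ ℝ² : x₁² + x₂² ≤ 1, x₁ ≥ 0, x₂ ≥ 0}, and define u₀, u₁ : X → ℝ by u₀(x₁, x₂) = −x₁ and u₁(x₁, x₂) = x₂. Then: (1) the pair (u₀, {u₁}) satisfies 1-Strong Pareto, i.e. for all x, y ∈ X, u₁(x) ≥ u₁(y) implies u₀(x) ≥ u₀(y) − 1, and u₁(x) > u₁(y) implies u₀(x) > u₀(y) − 1; and (2) for every a₁ > 0 the function u₀ − a₁u₁ has oscillation ω(u₀ − a₁u₁) ≥ √(1 + a₁²) > 1, so there is no w(x) = a₁u₁(x) + b with a₁ > 0 and ‖u₀ − w‖∞ ≤ 1/2. -/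
/-!
Strong Pareto holds because `x₁ - y₁ ≤ 1` on the quarter disc, with equality only at `x = (1, 0)`,
where `x₂` is minimal. For `a > 0`, the function `-x₁ - a x₂` is `0` at the origin and `-√(1 + a²)`
at the point of the quarter circle where its level lines are tangent to the circle, so its
oscillation is at least `√(1 + a²) > 1`, while an aggregator within `1/2` would force an
oscillation of at most `1`.
-/

/-- The quarter disc `X = {(x₁,x₂) ∈ ℝ² : x₁² + x₂² ≤ 1, x₁ ≥ 0, x₂ ≥ 0}`. -/
def quarterDisc : Set (ℝ × ℝ) :=
  {p : ℝ × ℝ | p.1 ^ 2 + p.2 ^ 2 ≤ 1 ∧ 0 ≤ p.1 ∧ 0 ≤ p.2}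

open Set

lemma zero_mem_quarterDisc : ((0, 0) : ℝ × ℝ) ∈ quarterDisc := by
  norm_num [quarterDisc]

lemma isCompact_quarterDisc : IsCompact quarterDisc := by
  have hsub : quarterDisc ⊆ Icc (0, 0) (1, 1) := by
    rintro p ⟨hp, h1, h2⟩
    exact ⟨⟨h1, h2⟩, by nlinarith, by nlinarith⟩
  refine isCompact_Icc.of_isClosed_subset ?_ hsub
  have hnorm : Continuous fun p : ℝ × ℝ => p.1 ^ 2 + p.2 ^ 2 := by fun_prop
  exact (isClosed_le hnorm continuous_const).inter
    ((isClosed_le continuous_const continuous_fst).inter (isClosed_le continuous_const continuous_snd))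

lemma fst_sub_fst_le_one {x y : ℝ × ℝ} (hx : x ∈ quarterDisc) (hy : y ∈ quarterDisc) :
    x.1 - y.1 ≤ 1 := by
  obtain ⟨hx, -, -⟩ := hx
  obtain ⟨-, hy1, -⟩ := hy
  nlinarith

lemma fst_sub_fst_lt_one_of_snd_lt {x y : ℝ × ℝ} (hx : x ∈ quarterDisc) (hy : y ∈ quarterDisc)
    (h : y.2 < x.2) : x.1 - y.1 < 1 := by
  obtain ⟨hx, -, -⟩ := hx
  obtain ⟨-, hy1, hy2⟩ := hy
  nlinarith

lemma one_lt_sqrt_one_add_sq {a : ℝ} (ha : a ≠ 0) : 1 < √(1 + a ^ 2) := by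
  rw [Real.lt_sqrt zero_le_one]
  have : 0 < a ^ 2 := by positivity
  linarith

/-- The minimiser of `-x₁ - a x₂` on the unit disc: the point of the circle with normal `(1, a)`. -/
noncomputable def tangentPoint (a : ℝ) : ℝ × ℝ :=
  (1 / √(1 + a ^ 2), a / √(1 + a ^ 2))

lemma sqrt_one_add_sq_pos (a : ℝ) : 0 < √(1 + a ^ 2) :=
  Real.sqrt_pos.2 (by positivity)

lemma tangentPoint_mem_quarterDisc {a : ℝ} (ha : 0 ≤ a) : tangentPoint a ∈ quarterDisc := by
  have hr := sqrt_one_add_sq_pos a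
  refine ⟨le_of_eq ?_, by unfold tangentPoint; positivity, by unfold tangentPoint; positivity⟩
  simp only [tangentPoint, div_pow, ← add_div, Real.sq_sqrt (by positivity : (0 : ℝ) ≤ 1 + a ^ 2)]
  field_simp

lemma neg_fst_sub_mul_snd_tangentPoint (a : ℝ) :
    -(tangentPoint a).1 - a * (tangentPoint a).2 = -√(1 + a ^ 2) := by
  have hr := sqrt_one_add_sq_pos a
  have hr2 := Real.sq_sqrt (by positivity : (0 : ℝ) ≤ 1 + a ^ 2)
  simp only [tangentPoint]
  field_simp
  linarith

lemma sub_le_csSup_image_sub_csInf_image {α : Type*} {s : Set α} {f : α → ℝ}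
    (hf : BddAbove (f '' s)) (hf' : BddBelow (f '' s)) {p q : α} (hp : p ∈ s) (hq : q ∈ s) :
    f p - f q ≤ sSup (f '' s) - sInf (f '' s) :=
  sub_le_sub (le_csSup hf (mem_image_of_mem f hp)) (csInf_le hf' (mem_image_of_mem f hq))

/-- Example: 1-Strong Pareto without positive-weight aggregation.
With `u₀(x₁,x₂) = −x₁` and `u₁(x₁,x₂) = x₂` on the quarter disc:
(1) the pair `(u₀, {u₁})` satisfies 1-Strong Pareto; and
(2) for every `a₁ > 0` the oscillation of `u₀ − a₁ u₁` is at least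
`√(1 + a₁²) > 1`, so there is no `w = a₁ u₁ + b` with `a₁ > 0` and
`‖u₀ − w‖∞ ≤ 1/2`. -/
theorem stmt15 :
    -- (1) 1-Strong Pareto
    (∀ x ∈ quarterDisc, ∀ y ∈ quarterDisc,
      (y.2 ≤ x.2 → -y.1 - 1 ≤ -x.1) ∧ (y.2 < x.2 → -y.1 - 1 < -x.1)) ∧
    -- (2) the oscillation lower bound
    (∀ a₁ : ℝ, 0 < a₁ →
      (1 : ℝ) < Real.sqrt (1 + a₁ ^ 2) ∧
      Real.sqrt (1 + a₁ ^ 2) ≤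
        sSup ((fun p : ℝ × ℝ => -p.1 - a₁ * p.2) '' quarterDisc) -
          sInf ((fun p : ℝ × ℝ => -p.1 - a₁ * p.2) '' quarterDisc)) ∧
    -- hence no strictly positive approximate aggregator
    ¬ ∃ (a₁ b : ℝ), 0 < a₁ ∧
        ∀ p ∈ quarterDisc, |(-p.1) - (a₁ * p.2 + b)| ≤ 1 / 2 := by
  refine ⟨fun x hx y hy => ⟨fun _ => ?_, fun h => ?_⟩, fun a ha => ⟨?_, ?_⟩, ?_⟩
  · linarith [fst_sub_fst_le_one hx hy]
  · linarith [fst_sub_fst_lt_one_of_snd_lt hx hy h]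
  · exact one_lt_sqrt_one_add_sq ha.ne'
  · have hcont : Continuous fun p : ℝ × ℝ => -p.1 - a * p.2 := by fun_prop
    have hosc := sub_le_csSup_image_sub_csInf_image
      (isCompact_quarterDisc.bddAbove_image hcont.continuousOn)
      (isCompact_quarterDisc.bddBelow_image hcont.continuousOn)
      zero_mem_quarterDisc (tangentPoint_mem_quarterDisc ha.le)
    simp only [neg_fst_sub_mul_snd_tangentPoint] at hosc
    simpa using hosc
  · rintro ⟨a, b, ha, hclose⟩
    have h0 := abs_le.1 (hclose _ zero_mem_quarterDisc)
    have ht := abs_le.1 (hclose _ (tangentPoint_mem_quarterDisc ha.le))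
    have hval := neg_fst_sub_mul_snd_tangentPoint a
    have hr := one_lt_sqrt_one_add_sq ha.ne'
    simp only [neg_zero, mul_zero, zero_add, zero_sub] at h0
    linarith [ht.1, ht.2, h0.1, h0.2]
end

section
/- Let X = {(x₁, x₂) ∈ ℝ² : x₁² + x₂² ≤ 1, x₁ ≥ 0, x₂ ≥ 0}, and define u₀, u₁ : X → ℝ by u₀(x₁, x₂) = −x₁ and u₁(x₁, x₂) = x₂. Then the pair (u₀, {u₁}) does not satisfy Sequential 1-Strong Pareto: there exist sequences (x_n), (y_n) in X with u₁(x_n) > u₁(y_n) for all n and lim_{n→∞} (u₀(y_n) − u₀(x_n) − 1)/(u₁(x_n) − u₁(y_n)) = 0, so in particular liminf_{n→∞} (u₀(y_n) − u₀(x_n) − 1)/(u₁(x_n) − u₁(y_n)) ≥ 0. -/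
/-!
Take `y_n = (0, 0)` and let `x_n` run along the unit circle towards `(1, 0)`. In the rational
parametrisation `x(s) = ((1 - s²)/(1 + s²), 2s/(1 + s²))` one has `x₁ - 1 = -2s²/(1 + s²)` and
`x₂ = 2s/(1 + s²)`, so the ratio in condition (b) is exactly `-s`, which tends to `0` as `s → 0⁺`.
-/

/-- The ratio `(u₀(y) − u₀(x) − 1)/(u₁(x) − u₁(y))` for `u₀ = -x₁`, `u₁ = x₂`. -/
noncomputable def paretoRatio (x y : ℝ × ℝ) : ℝ :=
  ((-y.1) - (-x.1) - 1) / (x.2 - y.2)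

noncomputable def circlePoint (s : ℝ) : ℝ × ℝ :=
  ((1 - s ^ 2) / (1 + s ^ 2), 2 * s / (1 + s ^ 2))

theorem circlePoint_fst_sq_add_snd_sq (s : ℝ) :
    (circlePoint s).1 ^ 2 + (circlePoint s).2 ^ 2 = 1 := by
  have : (1 + s ^ 2) ≠ 0 := by positivity
  simp only [circlePoint]
  field_simp
  ring

theorem circlePoint_mem_quarterDisc {s : ℝ} (hs₀ : 0 ≤ s) (hs₁ : s ≤ 1) :
    circlePoint s ∈ quarterDisc :=
  ⟨(circlePoint_fst_sq_add_snd_sq s).le,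
    div_nonneg (by nlinarith) (by positivity), div_nonneg (by positivity) (by positivity)⟩

theorem circlePoint_snd_pos {s : ℝ} (hs : 0 < s) : 0 < (circlePoint s).2 := by
  simp only [circlePoint]
  positivity

theorem paretoRatio_circlePoint_zero {s : ℝ} (hs : 0 < s) :
    paretoRatio (circlePoint s) (0, 0) = -s := by
  have : (1 + s ^ 2) ≠ 0 := by positivity
  simp only [paretoRatio, circlePoint]
  field_simp
  ring

/-- Example: failure of Sequential 1-Strong Pareto.
With `u₀(x₁,x₂) = −x₁` and `u₁(x₁,x₂) = x₂` on the quarter disc, there exist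
sequences `(x_n), (y_n)` in `X` with `u₁(x_n) > u₁(y_n)` for all `n` and
`lim (u₀(y_n) − u₀(x_n) − 1)/(u₁(x_n) − u₁(y_n)) = 0`, so in particular the
corresponding limit inferior is `≥ 0`; hence `(u₀, {u₁})` violates condition (b)
of Sequential 1-Strong Pareto. -/
theorem stmt16 :
    ∃ xs ys : ℕ → ℝ × ℝ,
      (∀ n, xs n ∈ quarterDisc) ∧ (∀ n, ys n ∈ quarterDisc) ∧
      (∀ n, (ys n).2 < (xs n).2) ∧
      Filter.Tendsto
        (fun n => ((-(ys n).1) - (-(xs n).1) - 1) / ((xs n).2 - (ys n).2))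
        Filter.atTop (nhds 0) ∧
      0 ≤ Filter.liminf
        (fun n => ((-(ys n).1) - (-(xs n).1) - 1) / ((xs n).2 - (ys n).2))
        Filter.atTop := by
  set s : ℕ → ℝ := fun n => 1 / ((n : ℝ) + 1)
  have hs_pos (n : ℕ) : 0 < s n := by positivity
  have hs_le_one (n : ℕ) : s n ≤ 1 := div_le_one_of_le₀ (by simp) (by positivity)
  have hratio : Filter.Tendsto (fun n => paretoRatio (circlePoint (s n)) (0, 0))
      Filter.atTop (nhds 0) := by
    simp only [paretoRatio_circlePoint_zero (hs_pos _)]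
    simpa [s] using (tendsto_one_div_add_atTop_nhds_zero_nat (𝕜 := ℝ)).neg
  refine ⟨fun n => circlePoint (s n), fun _ => (0, 0),
    fun n => circlePoint_mem_quarterDisc (hs_pos n).le (hs_le_one n),
    fun _ => ⟨by norm_num, le_rfl, le_rfl⟩, fun n => circlePoint_snd_pos (hs_pos n),
    hratio, hratio.liminf_eq.ge⟩
end

section
/- Let ε ≥ 0, let S be a nonempty finite set of states, let C be a nonempty set of consequences, and for each i = 1, …, N let μ_i : S → [0,1] with Σ_{s∈S} μ_i(s) = 1 be a probability vector and v_i : C → ℝ a bounded function with sup_{c∈C} |v_i(c) − v₁(c)| ≤ ε/2. Define utilities over acts f : S → C by u_i(f) = Σ_{s∈S} μ_i(s) v_i(f(s)). Let λ₁, …, λ_N ≥ 0 with Σ_{i=1}^N λ_i = 1, set u₀ = Σ_{i=1}^N λ_i u_i and μ = Σ_{i=1}^N λ_i μ_i. Then the subjective expected utility functional f ↦ Σ_{s∈S} μ(s) v₁(f(s)) satisfies |u₀(f) − Σ_{s∈S} μ(s) v₁(f(s))| ≤ ε/2 for every act f : S → C. -/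
/-!
Exchanging the two sums writes the difference as the `λ`-average of the `μᵢ`-expectations of
`vᵢ ∘ f − v₁ ∘ f`. That function has absolute value at most `ε/2` everywhere, and an average
with nonnegative weights summing to one cannot exceed that bound, so the estimate holds at both levels.
-/

open Finset

section WeightedSum

variable {R ι σ : Type*}

theorem sum_mul_sum_mul_sub_sum_sum_mul_mul [CommRing R] [Fintype ι] [Fintype σ]
    (l : ι → R) (μ a : ι → σ → R) (b : σ → R) :
    (∑ i, l i * ∑ s, μ i s * a i s) - ∑ s, (∑ i, l i * μ i s) * b s
      = ∑ i, l i * ∑ s, μ i s * (a i s - b s) := by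
  simp only [mul_sub, sum_sub_distrib, sum_mul, mul_sum, mul_assoc]
  rw [sum_comm (γ := σ)]

theorem abs_sum_mul_le_of_sum_eq_one [CommRing R] [LinearOrder R] [IsStrictOrderedRing R]
    (t : Finset ι) {w x : ι → R} {B : R}
    (hw0 : ∀ i ∈ t, 0 ≤ w i) (hw1 : ∑ i ∈ t, w i = 1) (hx : ∀ i ∈ t, |x i| ≤ B) :
    |∑ i ∈ t, w i * x i| ≤ B :=
  calc |∑ i ∈ t, w i * x i|
      ≤ ∑ i ∈ t, |w i * x i| := abs_sum_le_sum_abs _ _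
    _ ≤ ∑ i ∈ t, w i * B := sum_le_sum fun i hi => by
        rw [abs_mul, abs_of_nonneg (hw0 i hi)]
        exact mul_le_mul_of_nonneg_left (hx i hi) (hw0 i hi)
    _ = B := by rw [← sum_mul, hw1, one_mul]

end WeightedSum

theorem stmt17_general {S C : Type*} [Fintype S]
    {N : ℕ} (hN : 1 ≤ N) {ε : ℝ}
    (μ : Fin N → S → ℝ) (hμ0 : ∀ i s, 0 ≤ μ i s) (hμ1 : ∀ i, ∑ s, μ i s = 1)
    (v : Fin N → C → ℝ)
    (hv : ∀ i, ∀ c, |v i c - v ⟨0, hN⟩ c| ≤ ε / 2)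
    (l : Fin N → ℝ) (hl0 : ∀ i, 0 ≤ l i) (hl1 : ∑ i, l i = 1) :
    ∀ f : S → C,
      |(∑ i, l i * ∑ s, μ i s * v i (f s)) -
        ∑ s, (∑ i, l i * μ i s) * v ⟨0, hN⟩ (f s)| ≤ ε / 2 := by
  intro f
  rw [sum_mul_sum_mul_sub_sum_sum_mul_mul l μ (fun i s => v i (f s))]
  refine abs_sum_mul_le_of_sum_eq_one _ (fun i _ => hl0 i) hl1 fun i _ => ?_
  exact abs_sum_mul_le_of_sum_eq_one _ (fun s _ => hμ0 i s) (hμ1 i) fun s _ => hv i (f s)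

/-- Let `ε ≥ 0`, let `S` be a nonempty finite set of states, `C` a
nonempty set of consequences, and for each `i` let `μᵢ` be a probability vector on `S`
and `vᵢ : C → ℝ` with `sup_c |vᵢ(c) − v₁(c)| ≤ ε/2`.  With `uᵢ(f) = Σ_s μᵢ(s) vᵢ(f(s))`,
`u₀ = Σᵢ λᵢ uᵢ`, and `μ = Σᵢ λᵢ μᵢ`, the SEU functional `f ↦ Σ_s μ(s) v₁(f(s))`
satisfies `|u₀(f) − Σ_s μ(s) v₁(f(s))| ≤ ε/2` for every act `f : S → C`. -/
theorem stmt17 {S C : Type*} [Fintype S] [Nonempty S] [Nonempty C]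
    {N : ℕ} (hN : 1 ≤ N) {ε : ℝ} (hε : 0 ≤ ε)
    (μ : Fin N → S → ℝ) (hμ0 : ∀ i s, 0 ≤ μ i s) (hμ1 : ∀ i, ∑ s, μ i s = 1)
    (v : Fin N → C → ℝ)
    (hv : ∀ i, ∀ c, |v i c - v ⟨0, hN⟩ c| ≤ ε / 2)
    (l : Fin N → ℝ) (hl0 : ∀ i, 0 ≤ l i) (hl1 : ∑ i, l i = 1) :
    ∀ f : S → C,
      |(∑ i, l i * ∑ s, μ i s * v i (f s)) -
        ∑ s, (∑ i, l i * μ i s) * v ⟨0, hN⟩ (f s)| ≤ ε / 2 :=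
  stmt17_general hN μ hμ0 hμ1 v hv l hl0 hl1
end
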